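/- arXiv:2010.12870 — 5 statements merged into one kernel-verified Lean document; each statement's English description precedes it below -/
import Mathlib

section
/- If y_1, …, y_{t−1} are real numbers with |y_τ| ≤ 2H for all τ, then the weighted least-squares estimator w := Σ_t^{−1} (Σ_{τ=1}^{t−1} η^{−τ} φ_τ y_τ) satisfies ‖w‖ ≤ 2H √( d(1 − η^{t−1}) / (λ(1−η)) ). -/
open Finset Matrix

/-- The weighted regularized Gram matrix
`Σ_t = ∑_{τ=1}^{t-1} η^{-τ} φ_τ φ_τᵀ + λ η^{-(t-1)} I`. -/
noncomputable def gramMatrix (d : ℕ) (η lam : ℝ) (t : ℕ)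
    (φ : ℕ → EuclideanSpace ℝ (Fin d)) : Matrix (Fin d) (Fin d) ℝ :=
  ∑ τ ∈ Finset.Icc 1 (t - 1), η ^ (-(τ : ℤ)) • Matrix.vecMulVec (φ τ) (φ τ)
    + (lam * η ^ (-((t : ℤ) - 1))) • (1 : Matrix (Fin d) (Fin d) ℝ)

/-! The normal equations `Σ_t w = ∑ a_τ y_τ φ_τ`, with `Σ_t = ∑ a_τ φ_τ φ_τᵀ + c I`, give
`∑ a_τ ⟨φ_τ, w⟩² + c ‖w‖² = ∑ a_τ y_τ ⟨φ_τ, w⟩`. Bounding each `y u ≤ u² + y²/4` cancels the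
first sum and leaves `c ‖w‖² ≤ ∑ a_τ y_τ² / 4 ≤ H² ∑ a_τ`. For `a_τ = η^{-τ}` and
`c = λ η^{-(t-1)}` the geometric sum `η^{t-1} ∑_{τ<t} η^{-τ} = (1 - η^{t-1}) / (1 - η)` turns this
into `‖w‖ ≤ H √((1 - η^{t-1}) / (λ (1 - η)))`. -/

section WeightedGram

variable {m ι : Type*} [Fintype m] [DecidableEq m]

lemma dotProduct_weightedGram_mulVec (s : Finset ι) (a : ι → ℝ) (φ : ι → m → ℝ) (c : ℝ)
    (x : m → ℝ) :
    x ⬝ᵥ (∑ i ∈ s, a i • vecMulVec (φ i) (φ i) + c • 1) *ᵥ x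
      = ∑ i ∈ s, a i * (φ i ⬝ᵥ x) ^ 2 + c * (x ⬝ᵥ x) := by
  simp only [add_mulVec, sum_mulVec, smul_mulVec, vecMulVec_mulVec, one_mulVec, dotProduct_add,
    dotProduct_sum, dotProduct_smul, smul_eq_mul, op_smul_eq_smul, dotProduct_comm x (φ _)]
  congr 1
  exact sum_congr rfl fun i _ => by ring

lemma posDef_weightedGram {s : Finset ι} {a : ι → ℝ} (ha : ∀ i ∈ s, 0 ≤ a i) (φ : ι → m → ℝ)
    {c : ℝ} (hc : 0 < c) : (∑ i ∈ s, a i • vecMulVec (φ i) (φ i) + c • 1).PosDef := by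
  have hrank_one (i : ι) : (vecMulVec (φ i) (φ i)).PosSemidef := by
    simpa using posSemidef_vecMulVec_self_star (φ i)
  exact PosDef.posSemidef_add (posSemidef_sum s fun i hi => (hrank_one i).smul (ha i hi))
    (PosDef.one.smul hc)

lemma mul_dotProduct_self_le_of_weightedGram_mulVec_eq {s : Finset ι} {a : ι → ℝ}
    (ha : ∀ i ∈ s, 0 ≤ a i) (φ : ι → m → ℝ) (y : ι → ℝ) (c : ℝ) {w : m → ℝ}
    (hw : (∑ i ∈ s, a i • vecMulVec (φ i) (φ i) + c • 1) *ᵥ w = ∑ i ∈ s, (a i * y i) • φ i) :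
    c * (w ⬝ᵥ w) ≤ (∑ i ∈ s, a i * y i ^ 2) / 4 := by
  have hquad := dotProduct_weightedGram_mulVec s a φ c w
  rw [hw, dotProduct_sum] at hquad
  have hamgm : ∑ i ∈ s, w ⬝ᵥ (a i * y i) • φ i
      ≤ ∑ i ∈ s, a i * (φ i ⬝ᵥ w) ^ 2 + (∑ i ∈ s, a i * y i ^ 2) / 4 := by
    rw [sum_div, ← sum_add_distrib]
    refine sum_le_sum fun i hi => ?_
    rw [dotProduct_smul, smul_eq_mul, dotProduct_comm]
    nlinarith [mul_nonneg (ha i hi) (sq_nonneg (φ i ⬝ᵥ w - y i / 2))]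
  linarith

end WeightedGram

lemma pow_mul_sum_Icc_zpow_neg {η : ℝ} (hη : η ≠ 0) (n : ℕ) :
    η ^ n * ∑ τ ∈ Icc 1 n, η ^ (-(τ : ℤ)) = ∑ k ∈ range n, η ^ k := by
  induction n with
  | zero => simp
  | succ n ih =>
    rw [sum_Icc_succ_top (by omega), geom_sum_succ, ← ih, _root_.zpow_neg, zpow_natCast]
    field_simp
    ring

lemma gramMatrix_add_one (d : ℕ) (η lam : ℝ) (n : ℕ) (φ : ℕ → EuclideanSpace ℝ (Fin d)) :
    gramMatrix d η lam (n + 1) φ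
      = ∑ τ ∈ Icc 1 n, η ^ (-(τ : ℤ)) • vecMulVec (φ τ) (φ τ) + (lam / η ^ n) • 1 := by
  simp [gramMatrix, div_eq_mul_inv]

lemma norm_sq_le_of_eq_gramMatrix_inv_mulVec {d : ℕ} {η lam H : ℝ} (hη0 : 0 < η) (hη1 : η < 1)
    (hlam : 0 < lam) {n : ℕ} {φ : ℕ → EuclideanSpace ℝ (Fin d)} {y : ℕ → ℝ}
    (hy : ∀ τ ∈ Icc 1 n, |y τ| ≤ 2 * H) {w : EuclideanSpace ℝ (Fin d)}
    (hw : w.ofLp = (gramMatrix d η lam (n + 1) φ)⁻¹ *ᵥ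
        ∑ τ ∈ Icc 1 n, (η ^ (-(τ : ℤ)) * y τ) • (φ τ).ofLp) :
    ‖w‖ ^ 2 ≤ H ^ 2 * ((1 - η ^ n) / (lam * (1 - η))) := by
  have hweight : ∀ τ ∈ Icc 1 n, 0 ≤ η ^ (-(τ : ℤ)) := fun τ _ => zpow_nonneg hη0.le _
  have hc : 0 < lam / η ^ n := by positivity
  have hnormal : (∑ τ ∈ Icc 1 n, η ^ (-(τ : ℤ)) • vecMulVec (φ τ) (φ τ) + (lam / η ^ n) • 1)
      *ᵥ w.ofLp = ∑ τ ∈ Icc 1 n, (η ^ (-(τ : ℤ)) * y τ) • (φ τ).ofLp := by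
    have hunit := (posDef_weightedGram hweight (fun τ => (φ τ).ofLp) hc).isUnit
    rw [hw, gramMatrix_add_one, mulVec_mulVec,
      mul_nonsing_inv _ ((isUnit_iff_isUnit_det _).mp hunit), one_mulVec]
  have hridge := mul_dotProduct_self_le_of_weightedGram_mulVec_eq hweight _ _ _ hnormal
  have hresponses : ∑ τ ∈ Icc 1 n, η ^ (-(τ : ℤ)) * y τ ^ 2
      ≤ 4 * H ^ 2 * ∑ τ ∈ Icc 1 n, η ^ (-(τ : ℤ)) := by
    rw [mul_sum]
    refine sum_le_sum fun τ hτ => ?_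
    have hsq : y τ ^ 2 ≤ (2 * H) ^ 2 := sq_le_sq' (abs_le.mp (hy τ hτ)).1 (abs_le.mp (hy τ hτ)).2
    nlinarith [hweight τ hτ]
  have hgeom := pow_mul_sum_Icc_zpow_neg hη0.ne' n
  rw [geom_sum_eq hη1.ne, ← neg_div_neg_eq, neg_sub, neg_sub] at hgeom
  have hbound : lam / η ^ n * (w.ofLp ⬝ᵥ w.ofLp) ≤ H ^ 2 * ∑ τ ∈ Icc 1 n, η ^ (-(τ : ℤ)) := by
    linarith
  have hX : H ^ 2 * ((1 - η ^ n) / (lam * (1 - η)))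
      = H ^ 2 * (∑ τ ∈ Icc 1 n, η ^ (-(τ : ℤ))) / (lam / η ^ n) := by
    rw [mul_comm lam, ← div_div, ← hgeom]
    field_simp
  rw [← real_inner_self_eq_norm_sq, EuclideanSpace.inner_eq_star_dotProduct, star_trivial, hX,
    le_div_iff₀ hc, mul_comm]
  exact hbound

/-- If `|y_τ| ≤ 2H` for all `τ ∈ {1, …, t−1}`, then the weighted least-squares estimator
`w = Σ_t^{−1} (∑_{τ=1}^{t−1} η^{−τ} φ_τ y_τ)` satisfies
`‖w‖ ≤ 2H √(d(1 − η^{t−1}) / (λ(1−η)))`. -/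
theorem stmt_3 (d : ℕ) (hd : 1 ≤ d) (η lam H : ℝ) (hη : η ∈ Set.Ioo (0 : ℝ) 1)
    (hlam : 0 < lam) (hH : 0 < H) (t : ℕ) (ht : 1 ≤ t)
    (φ : ℕ → EuclideanSpace ℝ (Fin d)) (y : ℕ → ℝ)
    (hy : ∀ τ ∈ Finset.Icc 1 (t - 1), |y τ| ≤ 2 * H)
    (w : EuclideanSpace ℝ (Fin d))
    (hw : w = (gramMatrix d η lam t φ)⁻¹.mulVec
        (∑ τ ∈ Finset.Icc 1 (t - 1), (η ^ (-(τ : ℤ)) * y τ) • φ τ)) :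
    ‖w‖ ≤ 2 * H * Real.sqrt (d * (1 - η ^ (t - 1)) / (lam * (1 - η))) := by
  obtain ⟨n, rfl⟩ := Nat.exists_eq_add_of_le' ht
  simp only [Nat.add_sub_cancel] at hy hw ⊢
  have hsq := norm_sq_le_of_eq_gramMatrix_inv_mulVec hη.1 hη.2 hlam hy hw
  have hX : 0 ≤ (1 - η ^ n) / (lam * (1 - η)) :=
    div_nonneg (sub_nonneg.2 (pow_le_one₀ hη.1.le hη.2.le))
      (mul_nonneg hlam.le (sub_nonneg.2 hη.2.le))
  calc ‖w‖ ≤ H * √((1 - η ^ n) / (lam * (1 - η))) :=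
        (pow_le_pow_iff_left₀ (norm_nonneg w) (by positivity) two_ne_zero).mp
          (by rwa [mul_pow, Real.sq_sqrt hX])
    _ ≤ 2 * H * √(d * (1 - η ^ n) / (lam * (1 - η))) := by
      rw [mul_div_assoc]
      gcongr
      · linarith
      · exact le_mul_of_one_le_left hX (by exact_mod_cast hd)
end

section
/- The operator norm of Σ_t^{−1} Σ̃_t Σ_t^{−1} is at most 1/λ. -/
open Finset Matrix

/-- `Σ̃_t = ∑_{τ=1}^{t-1} η^{-2τ} φ_τ φ_τᵀ + λ η^{-2(t-1)} I`. -/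
noncomputable def gramMatrixSq (d : ℕ) (η lam : ℝ) (t : ℕ)
    (φ : ℕ → EuclideanSpace ℝ (Fin d)) : Matrix (Fin d) (Fin d) ℝ :=
  ∑ τ ∈ Finset.Icc 1 (t - 1), η ^ (-2 * (τ : ℤ)) • Matrix.vecMulVec (φ τ) (φ τ)
    + (lam * η ^ (-2 * ((t : ℤ) - 1))) • (1 : Matrix (Fin d) (Fin d) ℝ)

/-!
With `c = η^{-(t-1)}`, the weights satisfy `η^{-2τ} ≤ c η^{-τ}` for `τ ≤ t - 1` and the
regularizers satisfy `λ η^{-2(t-1)} = c · λ c`, so `Σ̃_t ≤ c Σ_t` in the Loewner order, while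
`λ c ≤ Σ_t`. Conjugating by the self-adjoint `Σ_t⁻¹` gives
`0 ≤ Σ_t⁻¹ Σ̃_t Σ_t⁻¹ ≤ c Σ_t⁻¹ ≤ c / (λ c) = 1/λ`, the last step by the continuous functional
calculus; and the norm of a positive element is the top of its spectrum.
-/

open scoped MatrixOrder Matrix.Norms.L2Operator

section

variable {A : Type*} [Ring A] [StarRing A] [Algebra ℝ A] [StarModule ℝ A] [PartialOrder A]
  [StarOrderedRing A]

theorem IsSelfAdjoint.of_algebraMap_le {a : A} {r : ℝ} (ha : algebraMap ℝ A r ≤ a) :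
    IsSelfAdjoint a := by
  simpa using (IsSelfAdjoint.of_nonneg (sub_nonneg.mpr ha)).add (.algebraMap A (.all r))

variable [TopologicalSpace A] [ContinuousFunctionalCalculus ℝ A IsSelfAdjoint]
  [NonnegSpectrumClass ℝ A]

theorem le_of_mem_spectrum_of_algebraMap_le {a : A} {r : ℝ} (ha : algebraMap ℝ A r ≤ a)
    {x : ℝ} (hx : x ∈ spectrum ℝ a) : r ≤ x :=
  (algebraMap_le_iff_le_spectrum (IsSelfAdjoint.of_algebraMap_le ha)).mp ha x hx

theorem isUnit_of_algebraMap_le {a : A} {r : ℝ} (hr : 0 < r) (ha : algebraMap ℝ A r ≤ a) :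
    IsUnit a := by
  rw [← spectrum.zero_notMem_iff ℝ]
  exact fun h0 => (le_of_mem_spectrum_of_algebraMap_le ha h0).not_gt hr

theorem ringInverse_le_algebraMap_inv {a : A} {r : ℝ} (hr : 0 < r) (ha : algebraMap ℝ A r ≤ a) :
    Ring.inverse a ≤ algebraMap ℝ A r⁻¹ := by
  have hsa : IsSelfAdjoint a := .of_algebraMap_le ha
  have hspec : ∀ x ∈ spectrum ℝ a, r ≤ x := fun x => le_of_mem_spectrum_of_algebraMap_le ha
  rw [← cfc_ringInverse_id (R := ℝ) a (isUnit_of_algebraMap_le hr ha) hsa]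
  refine (cfc_le_algebraMap_iff _ _ _ ?_ hsa).mpr fun x hx => inv_anti₀ hr (hspec x hx)
  exact continuousOn_inv₀.mono fun x hx => (hr.trans_le (hspec x hx)).ne'

theorem ringInverse_mul_mul_ringInverse_le {a b : A} {r c : ℝ} (hr : 0 < r) (hc : 0 ≤ c)
    (ha : algebraMap ℝ A r ≤ a) (hb : b ≤ c • a) :
    Ring.inverse a * b * Ring.inverse a ≤ algebraMap ℝ A (c / r) := by
  have hinv : IsSelfAdjoint (Ring.inverse a) := (IsSelfAdjoint.of_algebraMap_le ha).ringInverse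
  have hunit : IsUnit a := isUnit_of_algebraMap_le hr ha
  calc Ring.inverse a * b * Ring.inverse a ≤ Ring.inverse a * (c • a) * Ring.inverse a :=
        hinv.conjugate_le_conjugate hb
    _ = c • Ring.inverse a := by
        rw [mul_smul_comm, smul_mul_assoc, Ring.inverse_mul_cancel a hunit, one_mul]
    _ ≤ c • algebraMap ℝ A r⁻¹ :=
        smul_le_smul_of_nonneg_left (ringInverse_le_algebraMap_inv hr ha) hc
    _ = algebraMap ℝ A (c / r) := by rw [Algebra.smul_def, ← map_mul, div_eq_mul_inv]

end

section

variable {A : Type*} [NormedRing A] [StarRing A] [NormedAlgebra ℝ A] [PartialOrder A]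
  [StarOrderedRing A] [IsometricContinuousFunctionalCalculus ℝ A IsSelfAdjoint]
  [NonnegSpectrumClass ℝ A]

theorem norm_le_of_nonneg_of_le_algebraMap {a : A} {r : ℝ} (hr : 0 ≤ r) (ha₀ : 0 ≤ a)
    (ha : a ≤ algebraMap ℝ A r) : ‖a‖ ≤ r := by
  rw [← cfc_id ℝ a (.of_nonneg ha₀)]
  refine norm_cfc_le hr fun x hx => abs_le.mpr ⟨?_, ?_⟩
  · exact (neg_nonpos.mpr hr).trans (spectrum_nonneg_of_nonneg ha₀ hx)
  · exact (le_algebraMap_iff_spectrum_le (.of_nonneg ha₀)).mp ha x hx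

variable [StarModule ℝ A]

theorem norm_ringInverse_mul_mul_ringInverse_le {a b : A} {r c : ℝ} (hr : 0 < r) (hc : 0 ≤ c)
    (ha : algebraMap ℝ A r ≤ a) (hb₀ : 0 ≤ b) (hb : b ≤ c • a) :
    ‖Ring.inverse a * b * Ring.inverse a‖ ≤ c / r :=
  norm_le_of_nonneg_of_le_algebraMap (div_nonneg hc hr.le)
    ((IsSelfAdjoint.of_algebraMap_le ha).ringInverse.conjugate_nonneg hb₀)
    (ringInverse_mul_mul_ringInverse_le hr hc ha hb)

end

section RegularizedGram

variable {ι n : Type*} [DecidableEq n]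

def regularizedGram (s : Finset ι) (w : ι → ℝ) (v : ι → n → ℝ) (μ : ℝ) : Matrix n n ℝ :=
  ∑ i ∈ s, w i • vecMulVec (v i) (v i) + μ • 1

variable {s : Finset ι} {w w' : ι → ℝ} {v : ι → n → ℝ} {μ μ' : ℝ}

theorem smul_regularizedGram (c : ℝ) :
    c • regularizedGram s w v μ = regularizedGram s (fun i => c * w i) v (c * μ) := by
  simp only [regularizedGram, smul_add, smul_sum, smul_smul]

variable [Fintype n]

theorem regularizedGram_mono (hw : ∀ i ∈ s, w i ≤ w' i) (hμ : μ ≤ μ') :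
    regularizedGram s w v μ ≤ regularizedGram s w' v μ' := by
  refine add_le_add (sum_le_sum fun i hi => ?_) (smul_le_smul_of_nonneg_right hμ zero_le_one)
  refine smul_le_smul_of_nonneg_right (hw i hi) ?_
  simpa using (posSemidef_vecMulVec_self_star (v i)).nonneg

theorem algebraMap_le_regularizedGram (hw : ∀ i ∈ s, 0 ≤ w i) :
    algebraMap ℝ (Matrix n n ℝ) μ ≤ regularizedGram s w v μ := by
  simpa [regularizedGram, Algebra.algebraMap_eq_smul_one] using
    regularizedGram_mono (w := 0) (v := v) (μ := μ) hw le_rfl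

end RegularizedGram

theorem gramMatrix_eq_regularizedGram (d : ℕ) (η lam : ℝ) (t : ℕ)
    (φ : ℕ → EuclideanSpace ℝ (Fin d)) :
    gramMatrix d η lam t φ = regularizedGram (Icc 1 (t - 1)) (fun τ => η ^ (-(τ : ℤ)))
      (fun τ => (φ τ).ofLp) (lam * η ^ (-((t : ℤ) - 1))) := rfl

theorem gramMatrixSq_eq_regularizedGram (d : ℕ) (η lam : ℝ) (t : ℕ)
    (φ : ℕ → EuclideanSpace ℝ (Fin d)) :
    gramMatrixSq d η lam t φ = regularizedGram (Icc 1 (t - 1)) (fun τ => η ^ (-2 * (τ : ℤ)))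
      (fun τ => (φ τ).ofLp) (lam * η ^ (-2 * ((t : ℤ) - 1))) := rfl

theorem stmt_5_general (d : ℕ) (η lam : ℝ) (hη : η ∈ Set.Ioo (0 : ℝ) 1)
    (hlam : 0 < lam) (t : ℕ) (φ : ℕ → EuclideanSpace ℝ (Fin d)) :
    ‖Matrix.toEuclideanCLM (𝕜 := ℝ)
        ((gramMatrix d η lam t φ)⁻¹ * gramMatrixSq d η lam t φ *
          (gramMatrix d η lam t φ)⁻¹)‖ ≤ 1 / lam := by
  obtain ⟨hη0, hη1⟩ := hη
  set c : ℝ := η ^ (-((t : ℤ) - 1))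
  have hc : 0 < c := zpow_pos hη0 _
  have hG_lower : algebraMap ℝ _ (lam * c) ≤ gramMatrix d η lam t φ := by
    rw [gramMatrix_eq_regularizedGram]
    exact algebraMap_le_regularizedGram fun τ _ => (zpow_pos hη0 _).le
  have hGsq_nonneg : 0 ≤ gramMatrixSq d η lam t φ := by
    rw [gramMatrixSq_eq_regularizedGram]
    exact (algebraMap_nonneg _ (by positivity)).trans
      (algebraMap_le_regularizedGram fun τ _ => (zpow_pos hη0 _).le)
  have hGsq_le : gramMatrixSq d η lam t φ ≤ c • gramMatrix d η lam t φ := by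
    rw [gramMatrix_eq_regularizedGram, gramMatrixSq_eq_regularizedGram, smul_regularizedGram]
    refine regularizedGram_mono (fun τ hτ => ?_) (le_of_eq ?_)
    · have hτ' := mem_Icc.mp hτ
      rw [← zpow_add₀ hη0.ne']
      exact zpow_le_zpow_right_of_le_one₀ hη0 hη1.le (by omega)
    · rw [mul_left_comm, ← zpow_add₀ hη0.ne']
      ring_nf
  rw [Matrix.nonsing_inv_eq_ringInverse]
  -- the L2 operator norm of a matrix is by definition that of its `toEuclideanCLM`
  calc _ ≤ c / (lam * c) :=
        norm_ringInverse_mul_mul_ringInverse_le (by positivity) hc.le hG_lower hGsq_nonneg hGsq_le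
    _ = 1 / lam := by field_simp

/-- The (ℓ²-)operator norm of `Σ_t^{−1} Σ̃_t Σ_t^{−1}` is at most `1/λ`. -/
theorem stmt_5 (d : ℕ) (hd : 1 ≤ d) (η lam : ℝ) (hη : η ∈ Set.Ioo (0 : ℝ) 1)
    (hlam : 0 < lam) (t : ℕ) (ht : 1 ≤ t) (φ : ℕ → EuclideanSpace ℝ (Fin d)) :
    ‖Matrix.toEuclideanCLM (𝕜 := ℝ)
        ((gramMatrix d η lam t φ)⁻¹ * gramMatrixSq d η lam t φ *
          (gramMatrix d η lam t φ)⁻¹)‖ ≤ 1 / lam :=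
  stmt_5_general d η lam hη hlam t φ
end

section
/- log( det(Σ̃_t) / (λ η^{−2t})^d ) ≤ d · log( 1 + (1 − η^{2t}) / (λ d (1 − η²)) ). -/
/-!
AM-GM on the eigenvalues of the positive definite matrix `Σ̃_t` gives
`det Σ̃_t ≤ (tr Σ̃_t / d) ^ d`, and `tr Σ̃_t = ∑ η^{-2τ} ‖φ_τ‖² + d λ η^{-2t}` is at most
`η^{-2t} (1 - η^{2t}) / (1 - η²) + d λ η^{-2t}` by `‖φ_τ‖ ≤ 1` and the geometric sum.
-/

open Finset Matrix

/-- `Σ̃_t = ∑_{τ=1}^{t} η^{-2τ} φ_τ φ_τᵀ + λ η^{-2t} I`. -/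
noncomputable def gramMatrixSq' (d : ℕ) (η lam : ℝ) (t : ℕ)
    (φ : ℕ → EuclideanSpace ℝ (Fin d)) : Matrix (Fin d) (Fin d) ℝ :=
  ∑ τ ∈ Finset.Icc 1 t, η ^ (-2 * (τ : ℤ)) • Matrix.vecMulVec (φ τ) (φ τ)
    + (lam * η ^ (-2 * (t : ℤ))) • (1 : Matrix (Fin d) (Fin d) ℝ)

theorem Real.prod_le_sum_div_card_pow {ι : Type*} (s : Finset ι) (z : ι → ℝ)
    (hz : ∀ i ∈ s, 0 ≤ z i) : ∏ i ∈ s, z i ≤ ((∑ i ∈ s, z i) / #s) ^ #s := by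
  obtain rfl | hs := s.eq_empty_or_nonempty
  · simp
  have hn : #s ≠ 0 := hs.card_pos.ne'
  have amgm := Real.geom_mean_le_arith_mean_weighted s (fun _ ↦ (#s : ℝ)⁻¹) z
    (fun _ _ ↦ by positivity) (by simp [hn]) hz
  rw [← Finset.mul_sum, inv_mul_eq_div, Real.finsetProd_rpow s z hz] at amgm
  calc ∏ i ∈ s, z i = ((∏ i ∈ s, z i) ^ (#s : ℝ)⁻¹) ^ #s :=
        (Real.rpow_inv_natCast_pow (prod_nonneg hz) hn).symm
    _ ≤ _ := pow_le_pow_left₀ (Real.rpow_nonneg (prod_nonneg hz) _) amgm _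

theorem Matrix.PosSemidef.det_le_trace_div_card_pow {n : Type*} [Fintype n] [DecidableEq n]
    {A : Matrix n n ℝ} (hA : A.PosSemidef) :
    A.det ≤ (A.trace / Fintype.card n) ^ Fintype.card n := by
  simpa [hA.isHermitian.det_eq_prod_eigenvalues, hA.isHermitian.trace_eq_sum_eigenvalues] using
    Real.prod_le_sum_div_card_pow univ _ fun i _ ↦ hA.eigenvalues_nonneg i

theorem sum_Icc_inv_pow {x : ℝ} (hx₀ : x ≠ 0) (hx₁ : x ≠ 1) (t : ℕ) :
    ∑ τ ∈ Icc 1 t, x⁻¹ ^ τ = x⁻¹ ^ t * (1 - x ^ t) / (1 - x) := by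
  have h₁ : 1 - x ≠ 0 := sub_ne_zero.2 hx₁.symm
  have hinv : x * x⁻¹ = 1 := mul_inv_cancel₀ hx₀
  induction t with
  | zero => simp
  | succ t ih =>
    rw [sum_Icc_succ_top (by omega), ih, div_add' _ _ _ h₁, div_left_inj' h₁]
    linear_combination (x ^ t * x⁻¹ ^ t - x⁻¹ ^ t) * hinv

theorem zpow_neg_two_mul_natCast (x : ℝ) (n : ℕ) : x ^ (-2 * (n : ℤ)) = (x ^ 2)⁻¹ ^ n := by
  rw [_root_.zpow_mul, zpow_natCast, _root_.zpow_neg, zpow_ofNat]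

theorem EuclideanSpace.trace_vecMulVec_self {ι : Type*} [Fintype ι] (v : EuclideanSpace ℝ ι) :
    (vecMulVec v v).trace = ‖v‖ ^ 2 := by
  rw [trace_vecMulVec, ← real_inner_self_eq_norm_sq, EuclideanSpace.inner_eq_star_dotProduct,
    star_trivial]

theorem posDef_gramMatrixSq' {d : ℕ} {η lam : ℝ} (hη : 0 < η) (hlam : 0 < lam) (t : ℕ)
    (φ : ℕ → EuclideanSpace ℝ (Fin d)) : (gramMatrixSq' d η lam t φ).PosDef := by
  refine PosDef.posSemidef_add (posSemidef_sum _ fun τ _ ↦ ?_) (PosDef.one.smul (by positivity))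
  simpa only [star_trivial] using
    (posSemidef_vecMulVec_self_star (φ τ : Fin d → ℝ)).smul (zpow_pos hη (-2 * (τ : ℤ))).le

theorem trace_gramMatrixSq' (d : ℕ) (η lam : ℝ) (t : ℕ) (φ : ℕ → EuclideanSpace ℝ (Fin d)) :
    (gramMatrixSq' d η lam t φ).trace
      = ∑ τ ∈ Icc 1 t, η ^ (-2 * (τ : ℤ)) * ‖φ τ‖ ^ 2 + lam * η ^ (-2 * (t : ℤ)) * d := by
  simp only [gramMatrixSq', trace_add, trace_sum, trace_smul, trace_one,
    EuclideanSpace.trace_vecMulVec_self, Fintype.card_fin, smul_eq_mul]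

theorem trace_gramMatrixSq'_le {d : ℕ} {η : ℝ} (hη₀ : 0 < η) (hη₁ : η < 1) (lam : ℝ) (t : ℕ)
    {φ : ℕ → EuclideanSpace ℝ (Fin d)} (hφ : ∀ τ ∈ Icc 1 t, ‖φ τ‖ ≤ 1) :
    (gramMatrixSq' d η lam t φ).trace
      ≤ η ^ (-2 * (t : ℤ)) * (1 - η ^ (2 * t)) / (1 - η ^ 2) + lam * η ^ (-2 * (t : ℤ)) * d := by
  have hgeom : ∑ τ ∈ Icc 1 t, η ^ (-2 * (τ : ℤ))
      = η ^ (-2 * (t : ℤ)) * (1 - η ^ (2 * t)) / (1 - η ^ 2) := by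
    simp only [zpow_neg_two_mul_natCast, pow_mul]
    exact sum_Icc_inv_pow (by positivity) (by nlinarith) t
  rw [trace_gramMatrixSq', ← hgeom]
  gcongr with τ hτ
  calc η ^ (-2 * (τ : ℤ)) * ‖φ τ‖ ^ 2 ≤ η ^ (-2 * (τ : ℤ)) * 1 := by
        gcongr; exact pow_le_one₀ (norm_nonneg _) (hφ τ hτ)
    _ = _ := mul_one _

theorem stmt_7_general (d : ℕ) (hd : 1 ≤ d) (η lam : ℝ) (hη : η ∈ Set.Ioo (0 : ℝ) 1)
    (hlam : 0 < lam) (t : ℕ)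
    (φ : ℕ → EuclideanSpace ℝ (Fin d)) (hφ : ∀ τ ∈ Finset.Icc 1 t, ‖φ τ‖ ≤ 1) :
    Real.log ((gramMatrixSq' d η lam t φ).det / (lam * η ^ (-2 * (t : ℤ))) ^ d)
      ≤ d * Real.log (1 + (1 - η ^ (2 * t)) / (lam * d * (1 - η ^ 2))) := by
  obtain ⟨hη₀, hη₁⟩ := hη
  set A := gramMatrixSq' d η lam t φ
  set c := lam * η ^ (-2 * (t : ℤ))
  set B := 1 + (1 - η ^ (2 * t)) / (lam * d * (1 - η ^ 2))
  have hA : A.PosDef := posDef_gramMatrixSq' hη₀ hlam t φ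
  have hd₀ : (0 : ℝ) < d := by exact_mod_cast hd
  have hc : 0 < c := by positivity
  have htrace : A.trace / (d * c) ≤ B := by
    rw [div_le_iff₀ (by positivity)]
    refine (trace_gramMatrixSq'_le hη₀ hη₁ lam t hφ).trans_eq ?_
    have hη₂ : 1 - η ^ 2 ≠ 0 := by nlinarith
    simp only [B, c]
    field_simp
    ring
  have hdet : A.det / c ^ d ≤ B ^ d :=
    calc A.det / c ^ d ≤ (A.trace / d) ^ d / c ^ d := by
          gcongr; simpa using hA.posSemidef.det_le_trace_div_card_pow
      _ = (A.trace / (d * c)) ^ d := by rw [← div_pow, div_div]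
      _ ≤ B ^ d := by gcongr; exact div_nonneg hA.posSemidef.trace_nonneg (by positivity)
  have hdet_pos : 0 < A.det / c ^ d := div_pos hA.det_pos (pow_pos hc d)
  calc Real.log (A.det / c ^ d) ≤ Real.log (B ^ d) := Real.log_le_log hdet_pos hdet
    _ = d * Real.log B := Real.log_pow _ _

/-- `log(det(Σ̃_t) / (λ η^{−2t})^d) ≤ d log(1 + (1 − η^{2t}) / (λ d (1 − η²)))`. -/
theorem stmt_7 (d : ℕ) (hd : 1 ≤ d) (η lam : ℝ) (hη : η ∈ Set.Ioo (0 : ℝ) 1)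
    (hlam : 0 < lam) (t : ℕ) (ht : 1 ≤ t)
    (φ : ℕ → EuclideanSpace ℝ (Fin d)) (hφ : ∀ τ ∈ Finset.Icc 1 t, ‖φ τ‖ ≤ 1) :
    Real.log ((gramMatrixSq' d η lam t φ).det / (lam * η ^ (-2 * (t : ℤ))) ^ d)
      ≤ d * Real.log (1 + (1 - η ^ (2 * t)) / (lam * d * (1 - η ^ 2))) :=
  stmt_7_general d hd η lam hη hlam t φ hφ
end

section
/- For every θ ∈ ℝ^d with ‖θ‖ ≤ √d and every φ ∈ ℝ^d, λ η^{−(t−1)} |φᵀ Σ_t^{−1} θ| ≤ √(dλ) · √(φᵀ Σ_t^{−1} Σ̃_t Σ_t^{−1} φ). -/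
open Finset Matrix

lemma quadform_vecMulVec (d : ℕ) (v x : Fin d → ℝ) :
    x ⬝ᵥ (Matrix.vecMulVec v v).mulVec x = (v ⬝ᵥ x) ^ 2 := by
  simp only [dotProduct, Matrix.mulVec, Matrix.vecMulVec_apply, Finset.mul_sum]
  rw [sq, Finset.sum_mul_sum]
  exact Finset.sum_congr rfl fun i _ => Finset.sum_congr rfl fun j _ => by ring

/-- For every `θ` with `‖θ‖ ≤ √d` and every `φ`,
`λ η^{−(t−1)} |φᵀ Σ_t^{−1} θ| ≤ √(dλ) √(φᵀ Σ_t^{−1} Σ̃_t Σ_t^{−1} φ)`. -/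
theorem stmt_10 (d : ℕ) (hd : 1 ≤ d) (η lam : ℝ) (hη : η ∈ Set.Ioo (0 : ℝ) 1)
    (hlam : 0 < lam) (t : ℕ) (ht : 1 ≤ t) (φ : ℕ → EuclideanSpace ℝ (Fin d))
    (θ : EuclideanSpace ℝ (Fin d)) (hθ : ‖θ‖ ≤ Real.sqrt d)
    (φv : EuclideanSpace ℝ (Fin d)) :
    lam * η ^ (-((t : ℤ) - 1)) * |φv ⬝ᵥ (gramMatrix d η lam t φ)⁻¹.mulVec θ| ≤
      Real.sqrt (d * lam) *
        Real.sqrt (φv ⬝ᵥ ((gramMatrix d η lam t φ)⁻¹ * gramMatrixSq d η lam t φ *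
          (gramMatrix d η lam t φ)⁻¹).mulVec φv) := by
  obtain ⟨hη0, hη1⟩ := hη
  have hηne : η ≠ 0 := ne_of_gt hη0
  set A := gramMatrix d η lam t φ with hA
  set S := gramMatrixSq d η lam t φ with hS
  set x : Fin d → ℝ := A⁻¹.mulVec φv with hx
  -- symmetry of A
  have hAsymm : Aᵀ = A := by
    rw [hA, gramMatrix, Matrix.transpose_add, Matrix.transpose_smul,
      Matrix.transpose_one, Matrix.transpose_sum]
    congr 1
    refine Finset.sum_congr rfl fun τ _ => ?_
    rw [Matrix.transpose_smul]
    congr 1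
    ext i j
    simp [Matrix.vecMulVec_apply, mul_comm]
  have hAinv : (A⁻¹)ᵀ = A⁻¹ := by rw [Matrix.transpose_nonsing_inv, hAsymm]
  have h1 : φv ⬝ᵥ A⁻¹.mulVec θ = x ⬝ᵥ θ := by
    rw [Matrix.dotProduct_mulVec]
    congr 1
    rw [← hAinv, Matrix.vecMul_transpose]
  have h2 : φv ⬝ᵥ (A⁻¹ * S * A⁻¹).mulVec φv = x ⬝ᵥ S.mulVec x := by
    rw [← Matrix.mulVec_mulVec, ← Matrix.mulVec_mulVec, ← hx,
      Matrix.dotProduct_mulVec, ← hAinv, Matrix.vecMul_transpose]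
  rw [h1, h2]
  -- lower bound on the quadratic form
  have hxx : (0:ℝ) ≤ x ⬝ᵥ x := Finset.sum_nonneg fun i _ => mul_self_nonneg _
  have hQ : (lam * η ^ (-2 * ((t : ℤ) - 1))) * (x ⬝ᵥ x) ≤ x ⬝ᵥ S.mulVec x := by
    rw [hS, gramMatrixSq, Matrix.add_mulVec, dotProduct_add,
      Matrix.smul_mulVec, Matrix.one_mulVec, dotProduct_smul,
      smul_eq_mul]
    have hsum : (0:ℝ) ≤ x ⬝ᵥ (∑ τ ∈ Finset.Icc 1 (t - 1),
        η ^ (-2 * (τ : ℤ)) • Matrix.vecMulVec (φ τ) (φ τ)).mulVec x := by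
      have hsumv : (∑ τ ∈ Finset.Icc 1 (t - 1),
          η ^ (-2 * (τ : ℤ)) • Matrix.vecMulVec (φ τ) (φ τ)).mulVec x
          = ∑ τ ∈ Finset.Icc 1 (t - 1),
            (η ^ (-2 * (τ : ℤ)) • Matrix.vecMulVec (φ τ) (φ τ)).mulVec x := by
        ext i
        simp only [Matrix.mulVec, dotProduct, Finset.sum_apply,
          Matrix.sum_apply, Finset.sum_mul]
        rw [Finset.sum_comm]
      have hdsum : x ⬝ᵥ (∑ τ ∈ Finset.Icc 1 (t - 1),
          (η ^ (-2 * (τ : ℤ)) • Matrix.vecMulVec (φ τ) (φ τ)).mulVec x)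
          = ∑ τ ∈ Finset.Icc 1 (t - 1),
            x ⬝ᵥ (η ^ (-2 * (τ : ℤ)) • Matrix.vecMulVec (φ τ) (φ τ)).mulVec x := by
        simp only [dotProduct, Finset.sum_apply, Finset.mul_sum]
        rw [Finset.sum_comm]
      rw [hsumv, hdsum]
      refine Finset.sum_nonneg fun τ _ => ?_
      rw [Matrix.smul_mulVec, dotProduct_smul, smul_eq_mul,
        quadform_vecMulVec]
      positivity
    linarith
  -- Cauchy-Schwarz and the norm bound on θ
  have hCS : (x ⬝ᵥ θ) ^ 2 ≤ (x ⬝ᵥ x) * (θ ⬝ᵥ θ) := by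
    have := Finset.sum_mul_sq_le_sq_mul_sq Finset.univ x θ
    simpa [dotProduct, sq] using this
  have hθd : θ ⬝ᵥ θ ≤ (d : ℝ) := by
    have hnorm : ‖θ‖ ^ 2 = θ ⬝ᵥ θ := by
      rw [EuclideanSpace.norm_eq, Real.sq_sqrt (Finset.sum_nonneg fun i _ => sq_nonneg _)]
      simp [dotProduct, sq]
    have hd0 : (0:ℝ) ≤ Real.sqrt d := Real.sqrt_nonneg _
    have : ‖θ‖ ^ 2 ≤ (Real.sqrt d) ^ 2 := by
      apply pow_le_pow_left₀ (norm_nonneg _) hθ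
    rwa [hnorm, Real.sq_sqrt (Nat.cast_nonneg d)] at this
  have hθθ : (0:ℝ) ≤ θ ⬝ᵥ θ := Finset.sum_nonneg fun i _ => mul_self_nonneg _
  -- exponent algebra
  have hc2 : (lam * η ^ (-((t : ℤ) - 1))) ^ 2 = lam * (lam * η ^ (-2 * ((t : ℤ) - 1))) := by
    have : η ^ (-2 * ((t : ℤ) - 1)) = η ^ (-((t : ℤ) - 1)) * η ^ (-((t : ℤ) - 1)) := by
      rw [← zpow_add₀ hηne]; ring_nf
    rw [this]; ring
  have hc0 : 0 < lam * η ^ (-((t : ℤ) - 1)) := by positivity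
  -- squared inequality
  have hsq : (lam * η ^ (-((t : ℤ) - 1)) * |x ⬝ᵥ θ|) ^ 2 ≤
      ((d : ℝ) * lam) * (x ⬝ᵥ S.mulVec x) := by
    have e1 : (lam * η ^ (-((t : ℤ) - 1)) * |x ⬝ᵥ θ|) ^ 2
        = (lam * η ^ (-((t : ℤ) - 1))) ^ 2 * (x ⬝ᵥ θ) ^ 2 := by
      rw [mul_pow, sq_abs]
    rw [e1, hc2]
    have step1 : (x ⬝ᵥ θ) ^ 2 ≤ (x ⬝ᵥ x) * (d : ℝ) :=
      hCS.trans (mul_le_mul_of_nonneg_left hθd hxx)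
    calc lam * (lam * η ^ (-2 * ((t : ℤ) - 1))) * (x ⬝ᵥ θ) ^ 2
        ≤ lam * (lam * η ^ (-2 * ((t : ℤ) - 1))) * ((x ⬝ᵥ x) * (d : ℝ)) := by
          apply mul_le_mul_of_nonneg_left step1; positivity
      _ = ((d : ℝ) * lam) * ((lam * η ^ (-2 * ((t : ℤ) - 1))) * (x ⬝ᵥ x)) := by ring
      _ ≤ ((d : ℝ) * lam) * (x ⬝ᵥ S.mulVec x) := by
          apply mul_le_mul_of_nonneg_left hQ; positivity
  have hL0 : 0 ≤ lam * η ^ (-((t : ℤ) - 1)) * |x ⬝ᵥ θ| := by positivity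
  calc lam * η ^ (-((t : ℤ) - 1)) * |x ⬝ᵥ θ|
      = Real.sqrt ((lam * η ^ (-((t : ℤ) - 1)) * |x ⬝ᵥ θ|) ^ 2) := (Real.sqrt_sq hL0).symm
    _ ≤ Real.sqrt (((d : ℝ) * lam) * (x ⬝ᵥ S.mulVec x)) := Real.sqrt_le_sqrt hsq
    _ = Real.sqrt ((d : ℝ) * lam) * Real.sqrt (x ⬝ᵥ S.mulVec x) :=
        Real.sqrt_mul (by positivity) _
end

section
/- For all w, w̃ ∈ ℝ^d and all symmetric positive semidefinite d × d matrices A, Ã: sup over φ ∈ ℝ^d with ‖φ‖ ≤ 1 of |(wᵀφ + √(φᵀAφ)) − (w̃ᵀφ + √(φᵀÃφ))| ≤ ‖w − w̃‖ + √(‖A − Ã‖_F), where ‖·‖_F denotes the Frobenius norm. -/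
open Matrix

noncomputable def frobeniusNorm {d : ℕ} (A : Matrix (Fin d) (Fin d) ℝ) : ℝ :=
  Real.sqrt (∑ i, ∑ j, (A i j) ^ 2)

/-! The linear parts differ by `(w - w̃) ⬝ φ`, which Cauchy–Schwarz bounds by `‖w - w̃‖`. For the
square roots, `|√a - √b| ≤ √|a - b|` when `a, b ≥ 0`, and with `M = A - Ã` the quadratic form
obeys `|φᵀMφ| ≤ ‖φ‖ ‖Mφ‖ ≤ ‖M‖_F ‖φ‖²`, the last step being Cauchy–Schwarz on each row of `M`. -/

theorem Real.abs_sqrt_sub_sqrt_le {a b : ℝ} (ha : 0 ≤ a) (hb : 0 ≤ b) :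
    |√a - √b| ≤ √|a - b| := by
  wlog hba : b ≤ a generalizing a b
  · rw [abs_sub_comm, abs_sub_comm a]
    exact this hb ha (le_of_not_ge hba)
  have hab : 0 ≤ a - b := sub_nonneg.2 hba
  rw [abs_of_nonneg (sub_nonneg.2 (Real.sqrt_le_sqrt hba)), abs_of_nonneg hab, sub_le_iff_le_add,
    Real.sqrt_le_left (by positivity)]
  nlinarith [Real.sq_sqrt hab, Real.sq_sqrt hb,
    mul_nonneg (Real.sqrt_nonneg (a - b)) (Real.sqrt_nonneg b)]

theorem EuclideanSpace.abs_dotProduct_le_norm_mul_norm {ι : Type*} [Fintype ι]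
    (x y : EuclideanSpace ℝ ι) :
    |x ⬝ᵥ y| ≤ ‖x‖ * ‖y‖ := by
  simpa [EuclideanSpace.inner_eq_star_dotProduct, dotProduct_comm] using abs_real_inner_le_norm x y

theorem frobeniusNorm_nonneg {d : ℕ} (M : Matrix (Fin d) (Fin d) ℝ) : 0 ≤ frobeniusNorm M :=
  Real.sqrt_nonneg _

theorem norm_toLp_mulVec_le_frobeniusNorm_mul_norm {d : ℕ} (M : Matrix (Fin d) (Fin d) ℝ)
    (x : EuclideanSpace ℝ (Fin d)) :
    ‖WithLp.toLp 2 (M *ᵥ x)‖ ≤ frobeniusNorm M * ‖x‖ := by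
  have hrow (i : Fin d) : (M *ᵥ x) i ^ 2 ≤ (∑ j, M i j ^ 2) * ‖x‖ ^ 2 := by
    rw [EuclideanSpace.real_norm_sq_eq]
    simpa only [mulVec, dotProduct] using Finset.sum_mul_sq_le_sq_mul_sq _ (M i) x.ofLp
  refine le_of_pow_le_pow_left₀ two_ne_zero
    (mul_nonneg (frobeniusNorm_nonneg M) (norm_nonneg x)) ?_
  rw [EuclideanSpace.real_norm_sq_eq, mul_pow, frobeniusNorm, Real.sq_sqrt (by positivity),
    Finset.sum_mul]
  exact Finset.sum_le_sum fun i _ => hrow i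

theorem abs_dotProduct_mulVec_le_frobeniusNorm_mul_sq {d : ℕ} (M : Matrix (Fin d) (Fin d) ℝ)
    (x : EuclideanSpace ℝ (Fin d)) :
    |x ⬝ᵥ M *ᵥ x| ≤ frobeniusNorm M * ‖x‖ ^ 2 :=
  calc |x ⬝ᵥ M *ᵥ x| ≤ ‖x‖ * ‖WithLp.toLp 2 (M *ᵥ x)‖ :=
        EuclideanSpace.abs_dotProduct_le_norm_mul_norm x (WithLp.toLp 2 (M *ᵥ x))
    _ ≤ ‖x‖ * (frobeniusNorm M * ‖x‖) := by
        gcongr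
        exact norm_toLp_mulVec_le_frobeniusNorm_mul_norm M x
    _ = frobeniusNorm M * ‖x‖ ^ 2 := by ring

theorem stmt_12_general (d : ℕ)
    (w wt : EuclideanSpace ℝ (Fin d))
    (A At : Matrix (Fin d) (Fin d) ℝ)
    (hA : A.PosSemidef) (hAt : At.PosSemidef) :
    ∀ φ : EuclideanSpace ℝ (Fin d), ‖φ‖ ≤ 1 →
      |(w ⬝ᵥ φ + Real.sqrt (φ ⬝ᵥ A.mulVec φ)) -
          (wt ⬝ᵥ φ + Real.sqrt (φ ⬝ᵥ At.mulVec φ))| ≤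
        ‖w - wt‖ + Real.sqrt (frobeniusNorm (A - At)) := by
  intro φ hφ
  have hφsq : ‖φ‖ ^ 2 ≤ 1 := pow_le_one₀ (norm_nonneg φ) hφ
  have hlin : |(w - wt) ⬝ᵥ φ| ≤ ‖w - wt‖ :=
    (EuclideanSpace.abs_dotProduct_le_norm_mul_norm _ φ).trans
      (mul_le_of_le_one_right (norm_nonneg _) hφ)
  have hquad : |φ ⬝ᵥ (A - At) *ᵥ φ| ≤ frobeniusNorm (A - At) :=
    (abs_dotProduct_mulVec_le_frobeniusNorm_mul_sq _ φ).trans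
      (mul_le_of_le_one_right (frobeniusNorm_nonneg _) hφsq)
  have hsqrt : |√(φ ⬝ᵥ A *ᵥ φ) - √(φ ⬝ᵥ At *ᵥ φ)| ≤ √(frobeniusNorm (A - At)) := by
    refine (Real.abs_sqrt_sub_sqrt_le ?_ ?_).trans (Real.sqrt_le_sqrt ?_)
    · simpa using hA.dotProduct_mulVec_nonneg φ
    · simpa using hAt.dotProduct_mulVec_nonneg φ
    · rwa [sub_mulVec, dotProduct_sub] at hquad
  calc _ = |(w - wt) ⬝ᵥ φ + (√(φ ⬝ᵥ A *ᵥ φ) - √(φ ⬝ᵥ At *ᵥ φ))| := by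
        rw [WithLp.ofLp_sub, sub_dotProduct]
        congr 1
        ring
    _ ≤ |(w - wt) ⬝ᵥ φ| + |√(φ ⬝ᵥ A *ᵥ φ) - √(φ ⬝ᵥ At *ᵥ φ)| := abs_add_le _ _
    _ ≤ ‖w - wt‖ + √(frobeniusNorm (A - At)) := add_le_add hlin hsqrt

/-- Lipschitz-in-parameters estimate for `f^{w,A}(φ) = wᵀφ + √(φᵀAφ)`:
for all `w, w̃` and symmetric positive semidefinite `A, Ã`,
`sup_{‖φ‖≤1} |(wᵀφ + √(φᵀAφ)) − (w̃ᵀφ + √(φᵀÃφ))| ≤ ‖w − w̃‖ + √(‖A − Ã‖_F)`. -/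
theorem stmt_12 (d : ℕ) (hd : 1 ≤ d)
    (w wt : EuclideanSpace ℝ (Fin d))
    (A At : Matrix (Fin d) (Fin d) ℝ)
    (hA : A.PosSemidef) (hAt : At.PosSemidef) :
    ∀ φ : EuclideanSpace ℝ (Fin d), ‖φ‖ ≤ 1 →
      |(w ⬝ᵥ φ + Real.sqrt (φ ⬝ᵥ A.mulVec φ)) -
          (wt ⬝ᵥ φ + Real.sqrt (φ ⬝ᵥ At.mulVec φ))| ≤
        ‖w - wt‖ + Real.sqrt (frobeniusNorm (A - At)) :=
  stmt_12_general d w wt A At hA hAt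
end
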